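/- Let (A,≻,≺) be a finite-dimensional dendriform algebra and (l_≻,r_≻,l_≺,r_≺,V) a bimodule with V finite-dimensional; the dual bimodule (r_≻*+r_≺*, −l_≺*, −r_≻*, l_≻*+l_≺*, V*) is again a bimodule of (A,≻,≺). Let T : V → A be a linear map, identified with the element T = Σ_i T(v_i)⊗v_i* of A⊗V* ⊂ (A⊕V*)⊗(A⊕V*) for a basis {v_i} of V with dual basis {v_i*}. Then r = T + σ(T) is a symmetric solution of the D-equation in the semidirect product dendriform algebra A⋉V* formed with the dual bimodule if and only if T is an O-operator of (A,≻,≺) associated to (l_≻,r_≻,l_≺,r_≺,V). -/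

import Mathlib

set_option synthInstance.maxHeartbeats 1000000
set_option maxHeartbeats 1000000

open TensorProduct LinearMap Module

/-- Dendriform algebra axioms for a pair of bilinear products `succ` (≻) and `prec` (≺). -/
def IsDendriform {K A : Type*} [Field K] [AddCommGroup A] [Module K A]
    (succ prec : A →ₗ[K] A →ₗ[K] A) : Prop :=
  (∀ x y z : A, prec (prec x y) z = prec x (succ y z + prec y z)) ∧
  (∀ x y z : A, prec (succ x y) z = succ x (prec y z)) ∧
  (∀ x y z : A, succ x (succ y z) = succ (succ x y + prec x y) z)

/-- Bimodule of a dendriform algebra `(A, succ, prec)` on `V`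
(maps `l_≻ = ls`, `r_≻ = rs`, `l_≺ = lp`, `r_≺ = rp`). -/
def IsDendBimodule {K A V : Type*} [Field K] [AddCommGroup A] [Module K A]
    [AddCommGroup V] [Module K V] (succ prec : A →ₗ[K] A →ₗ[K] A)
    (ls rs lp rp : A →ₗ[K] V →ₗ[K] V) : Prop :=
  (∀ x y : A, lp (prec x y) = lp x ∘ₗ (lp y + ls y)) ∧
  (∀ x y : A, rp x ∘ₗ lp y = lp y ∘ₗ (rp x + rs x)) ∧
  (∀ x y : A, rp x ∘ₗ rp y = rp (succ y x + prec y x)) ∧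
  (∀ x y : A, lp (succ x y) = ls x ∘ₗ lp y) ∧
  (∀ x y : A, rp x ∘ₗ ls y = ls y ∘ₗ rp x) ∧
  (∀ x y : A, rp x ∘ₗ rs y = rs (prec y x)) ∧
  (∀ x y : A, ls (succ x y + prec x y) = ls x ∘ₗ ls y) ∧
  (∀ x y : A, rs x ∘ₗ (lp y + ls y) = ls y ∘ₗ rs x) ∧
  (∀ x y : A, rs x ∘ₗ (rs y + rp y) = rs (succ y x))

/-- `r₁₂ ∘ r₁₃` for `r ∈ B ⊗ B`: `Σ (aᵢ ∘ aⱼ) ⊗ bᵢ ⊗ bⱼ`. -/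
noncomputable def tprod12_13 {K B : Type*} [Field K] [AddCommGroup B] [Module K B]
    (m : B →ₗ[K] B →ₗ[K] B) (r : B ⊗[K] B) : B ⊗[K] (B ⊗[K] B) :=
  (TensorProduct.map (TensorProduct.lift m) LinearMap.id)
    ((TensorProduct.tensorTensorTensorComm K B B B B) (r ⊗ₜ[K] r))

/-- `r₁₃ ∘ r₂₃` for `r ∈ B ⊗ B`: `Σ aᵢ ⊗ aⱼ ⊗ (bᵢ ∘ bⱼ)`. -/
noncomputable def tprod13_23 {K B : Type*} [Field K] [AddCommGroup B] [Module K B]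
    (m : B →ₗ[K] B →ₗ[K] B) (r : B ⊗[K] B) : B ⊗[K] (B ⊗[K] B) :=
  (TensorProduct.assoc K B B B)
    ((TensorProduct.map LinearMap.id (TensorProduct.lift m))
      ((TensorProduct.tensorTensorTensorComm K B B B B) (r ⊗ₜ[K] r)))

/-- `r₂₃ ∘ r₁₂` for `r ∈ B ⊗ B`: `Σ aᵢ ⊗ (aⱼ ∘ bᵢ) ⊗ bⱼ`. -/
noncomputable def tprod23_12 {K B : Type*} [Field K] [AddCommGroup B] [Module K B]
    (m : B →ₗ[K] B →ₗ[K] B) (r : B ⊗[K] B) : B ⊗[K] (B ⊗[K] B) :=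
  (TensorProduct.map LinearMap.id (TensorProduct.comm K B B).toLinearMap)
    ((TensorProduct.assoc K B B B)
      ((TensorProduct.map LinearMap.id (TensorProduct.lift m))
        ((TensorProduct.tensorTensorTensorComm K B B B B)
          ((TensorProduct.map (TensorProduct.comm K B B).toLinearMap LinearMap.id)
            ((TensorProduct.tensorTensorTensorComm K B B B B) (r ⊗ₜ[K] r))))))

/-- Dualization `ρ ↦ ρ*` of an action `ρ : A →ₗ End V`, via transpose:
`⟨ρ*(x) v*, u⟩ = ⟨v*, ρ(x) u⟩`. -/
noncomputable def dualize {K A V : Type*} [Field K] [AddCommGroup A] [Module K A]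
    [AddCommGroup V] [Module K V] (ρ : A →ₗ[K] V →ₗ[K] V) :
    A →ₗ[K] Module.Dual K V →ₗ[K] Module.Dual K V :=
  (Module.Dual.transpose (R := K)) ∘ₗ ρ

/-- The semidirect-product bilinear product on `A × W` given by a product `m` on `A`
and a left action `φ` and a right action `ψ` of `A` on `W`:
`(x, a) ∘ (y, b) = (m x y, φ(x) b + ψ(y) a)`. -/
noncomputable def sd {K A W : Type*} [Field K] [AddCommGroup A] [Module K A]
    [AddCommGroup W] [Module K W]
    (m : A →ₗ[K] A →ₗ[K] A) (φ ψ : A →ₗ[K] W →ₗ[K] W) :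
    (A × W) →ₗ[K] (A × W) →ₗ[K] (A × W) :=
  ((m.compl₁₂ (LinearMap.fst K A W) (LinearMap.fst K A W)).compr₂ (LinearMap.inl K A W))
  + ((((φ.comp (LinearMap.fst K A W)).compl₂ (LinearMap.snd K A W))
      + (((ψ.comp (LinearMap.fst K A W)).compl₂ (LinearMap.snd K A W)).flip)).compr₂
      (LinearMap.inr K A W))

/-- The linear map `T : V → A` regarded as the element `Σ T(vᵢ) ⊗ vᵢ*` of
`A ⊗ V* ⊆ (A ⊕ V*) ⊗ (A ⊕ V*)`. -/
noncomputable def asTensor {K A V : Type*} [Field K] [AddCommGroup A] [Module K A]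
    [AddCommGroup V] [Module K V] [FiniteDimensional K V] (T : V →ₗ[K] A) :
    (A × Module.Dual K V) ⊗[K] (A × Module.Dual K V) :=
  (TensorProduct.map (LinearMap.inl K A (Module.Dual K V))
      (LinearMap.inr K A (Module.Dual K V)))
    ((TensorProduct.comm K (Module.Dual K V) A)
      ((dualTensorHomEquiv K V A).symm T))

/-! Product functionals `F ⊗ G ⊗ H` separate the points of `B ⊗ B ⊗ B`, and on `r₁₂ ∘ r₁₃`,
`r₁₃ ∘ r₂₃`, `r₂₃ ∘ r₁₂` they evaluate to `F (r·G ∘ r·H)`, `H (F·r ∘ G·r)`, `G (r·H ∘ F·r)`,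
where `r·G` and `F·r` contract `r` with a functional. A functional on `A ⋉ V*` is a pair
`(x, w) ∈ A* × V`, and contracting `r = T + σ(T)` with it gives `(T w, x ∘ T)`. The difference of
the two sides of the `D`-equation then evaluates to
`x₁ (δ≻(w₂, w₃) + δ≺(w₂, w₃)) - x₂ (δ≻(w₃, w₁)) - x₃ (δ≺(w₁, w₂))`, where `δ≻`, `δ≺` measure the
failure of the two `O`-operator identities, so it vanishes identically iff both of them hold.
The dual bimodule axioms are the transposes of combinations of the bimodule axioms. -/

section
variable {K M N P : Type*} [Field K] [AddCommGroup M] [Module K M] [AddCommGroup N] [Module K N]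
  [AddCommGroup P] [Module K P]

noncomputable def dualDistrib₃ (F : Dual K M) (G : Dual K N) (H : Dual K P) :
    Dual K (M ⊗[K] (N ⊗[K] P)) :=
  dualDistrib K M (N ⊗[K] P) (F ⊗ₜ dualDistrib K N P (G ⊗ₜ H))

@[simp]
lemma dualDistrib₃_tmul (F : Dual K M) (G : Dual K N) (H : Dual K P) (m : M) (n : N) (p : P) :
    dualDistrib₃ F G H (m ⊗ₜ (n ⊗ₜ p)) = F m * (G n * H p) := by
  simp [dualDistrib₃]

lemma eq_of_forall_dualDistrib₃_eq {t₁ t₂ : M ⊗[K] (N ⊗[K] P)}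
    (h : ∀ F G H, dualDistrib₃ F G H t₁ = dualDistrib₃ (K := K) F G H t₂) : t₁ = t₂ := by
  let bM := Basis.ofVectorSpace K M
  let bN := Basis.ofVectorSpace K N
  let bP := Basis.ofVectorSpace K P
  let b := bM.tensorProduct (bN.tensorProduct bP)
  have hcoord : ∀ i j k,
      b.coord (i, (j, k)) = dualDistrib₃ (bM.coord i) (bN.coord j) (bP.coord k) := by
    intro i j k
    ext m n p
    simp only [AlgebraTensorModule.curry_apply, restrictScalars_self, curry_apply, b,
      Basis.coord_apply, Basis.tensorProduct_repr_tmul_apply, dualDistrib₃_tmul, smul_eq_mul]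
    ring
  rw [← sub_eq_zero, ← b.forall_coord_eq_zero_iff]
  rintro ⟨i, j, k⟩
  rw [map_sub, hcoord, h, sub_self]

noncomputable def rightContract (g : Dual K N) : M ⊗[K] N →ₗ[K] M :=
  (TensorProduct.rid K M).toLinearMap ∘ₗ g.lTensor M

noncomputable def leftContract (f : Dual K M) : M ⊗[K] N →ₗ[K] N :=
  (TensorProduct.lid K N).toLinearMap ∘ₗ f.rTensor N

@[simp] lemma rightContract_tmul (g : Dual K N) (m : M) (n : N) :
    rightContract g (m ⊗ₜ[K] n) = g n • m := by simp [rightContract]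
@[simp] lemma leftContract_tmul (f : Dual K M) (m : M) (n : N) :
    leftContract f (m ⊗ₜ[K] n) = f m • n := by simp [leftContract]

lemma rightContract_comm (g : Dual K M) (t : M ⊗[K] N) :
    rightContract g (TensorProduct.comm K M N t) = leftContract g t := by
  induction t using TensorProduct.induction_on <;> simp_all
end

section
variable {K B : Type*} [Field K] [AddCommGroup B] [Module K B] (m : B →ₗ[K] B →ₗ[K] B)
  (F G H : Dual K B) (r : B ⊗[K] B)

lemma dualDistrib₃_tprod12_13 :
    dualDistrib₃ F G H (tprod12_13 m r) = F (m (rightContract G r) (rightContract H r)) := by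
  suffices ∀ s, dualDistrib₃ F G H ((TensorProduct.map (TensorProduct.lift m) LinearMap.id)
      ((TensorProduct.tensorTensorTensorComm K B B B B) (r ⊗ₜ[K] s))) =
      F (m (rightContract G r) (rightContract H s)) from this r
  intro s
  induction r using TensorProduct.induction_on with
  | zero => simp
  | add r r' hr hr' => simp [add_tmul, hr, hr']
  | tmul a b =>
    induction s using TensorProduct.induction_on with
    | zero => simp
    | add s s' hs hs' => simp_all [tmul_add]
    | tmul c d =>
      simp only [tensorTensorTensorComm_tmul, map_tmul, lift.tmul, id_coe, id_eq,
        dualDistrib₃_tmul, rightContract_tmul, map_smul, LinearMap.smul_apply, smul_eq_mul]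
      ring

lemma dualDistrib₃_tprod13_23 :
    dualDistrib₃ F G H (tprod13_23 m r) = H (m (leftContract F r) (leftContract G r)) := by
  suffices ∀ s, dualDistrib₃ F G H ((TensorProduct.assoc K B B B)
      ((TensorProduct.map LinearMap.id (TensorProduct.lift m))
        ((TensorProduct.tensorTensorTensorComm K B B B B) (r ⊗ₜ[K] s)))) =
      H (m (leftContract F r) (leftContract G s)) from this r
  intro s
  induction r using TensorProduct.induction_on with
  | zero => simp
  | add r r' hr hr' => simp [add_tmul, hr, hr']
  | tmul a b =>
    induction s using TensorProduct.induction_on with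
    | zero => simp
    | add s s' hs hs' => simp_all [tmul_add]
    | tmul c d =>
      simp only [tensorTensorTensorComm_tmul, map_tmul, id_coe, id_eq, lift.tmul, assoc_tmul,
        dualDistrib₃_tmul, leftContract_tmul, map_smul, LinearMap.smul_apply, smul_eq_mul]
      ring

lemma dualDistrib₃_tprod23_12 :
    dualDistrib₃ F G H (tprod23_12 m r) = G (m (rightContract H r) (leftContract F r)) := by
  suffices ∀ s, dualDistrib₃ F G H
      ((TensorProduct.map LinearMap.id (TensorProduct.comm K B B).toLinearMap)
        ((TensorProduct.assoc K B B B)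
          ((TensorProduct.map LinearMap.id (TensorProduct.lift m))
            ((TensorProduct.tensorTensorTensorComm K B B B B)
              ((TensorProduct.map (TensorProduct.comm K B B).toLinearMap LinearMap.id)
                ((TensorProduct.tensorTensorTensorComm K B B B B) (r ⊗ₜ[K] s))))))) =
      G (m (rightContract H r) (leftContract F s)) from this r
  intro s
  induction r using TensorProduct.induction_on with
  | zero => simp
  | add r r' hr hr' => simp [add_tmul, hr, hr']
  | tmul a b =>
    induction s using TensorProduct.induction_on with
    | zero => simp
    | add s s' hs hs' => simp_all [tmul_add]
    | tmul c d =>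
      simp only [tensorTensorTensorComm_tmul, map_tmul, LinearEquiv.coe_coe, comm_tmul, id_coe,
        id_eq, lift.tmul, assoc_tmul, dualDistrib₃_tmul, rightContract_tmul, map_smul,
        leftContract_tmul, LinearMap.smul_apply, smul_eq_mul]
      ring
end

section
variable {K A V : Type*} [Field K] [AddCommGroup A] [Module K A] [AddCommGroup V] [Module K V]

lemma sd_apply {W : Type*} [AddCommGroup W] [Module K W] (m : A →ₗ[K] A →ₗ[K] A)
    (φ ψ : A →ₗ[K] W →ₗ[K] W) (x y : A) (a b : W) :
    sd m φ ψ (x, a) (y, b) = (m x y, φ x b + ψ y a) := by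
  simp [sd]

lemma rightContract_map_inl_inr (x : Dual K A) (w : V) (t : Dual K V ⊗[K] A) :
    rightContract (x.coprod (Dual.eval K V w))
      (TensorProduct.map (LinearMap.inl K A (Dual K V)) (LinearMap.inr K A (Dual K V))
        (TensorProduct.comm K (Dual K V) A t)) = (dualTensorHom K V A t w, 0) := by
  induction t using TensorProduct.induction_on with
  | zero => simp [Prod.zero_eq_mk]
  | tmul f a => simp
  | add t t' ht ht' => simp_all

lemma leftContract_map_inl_inr (x : Dual K A) (w : V) (t : Dual K V ⊗[K] A) :
    leftContract (x.coprod (Dual.eval K V w))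
      (TensorProduct.map (LinearMap.inl K A (Dual K V)) (LinearMap.inr K A (Dual K V))
        (TensorProduct.comm K (Dual K V) A t)) = (0, x ∘ₗ dualTensorHom K V A t) := by
  induction t using TensorProduct.induction_on with
  | zero => simp [Prod.zero_eq_mk]
  | tmul f a => refine Prod.ext (by simp) (LinearMap.ext fun v => by simp [mul_comm])
  | add t t' ht ht' => simp_all [LinearMap.comp_add]

variable [FiniteDimensional K V]

lemma rightContract_asTensor_add_comm (T : V →ₗ[K] A) (x : Dual K A) (w : V) :
    rightContract (x.coprod (Dual.eval K V w))
      (asTensor T + TensorProduct.comm K _ _ (asTensor T)) = (T w, x ∘ₗ T) := by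
  simp [asTensor, rightContract_comm, rightContract_map_inl_inr, leftContract_map_inl_inr]

lemma leftContract_asTensor_add_comm (T : V →ₗ[K] A) (x : Dual K A) (w : V) :
    leftContract (x.coprod (Dual.eval K V w))
      (asTensor T + TensorProduct.comm K _ _ (asTensor T)) = (T w, x ∘ₗ T) := by
  rw [← rightContract_comm, map_add, comm_comm, add_comm, rightContract_asTensor_add_comm]
end

section
variable {K A V : Type*} [Field K] [AddCommGroup A] [Module K A] [AddCommGroup V] [Module K V]
  {succ prec : A →ₗ[K] A →ₗ[K] A} {ls rs lp rp : A →ₗ[K] V →ₗ[K] V}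

theorem IsDendBimodule.dual (hbim : IsDendBimodule succ prec ls rs lp rp) :
    IsDendBimodule succ prec
      (dualize (rs + rp)) (dualize (-lp)) (dualize (-rs)) (dualize (ls + lp)) := by
  obtain ⟨h1, h2, h3, h4, h5, h6, h7, h8, h9⟩ := hbim
  simp only [map_add, LinearMap.comp_add] at h1 h2 h3 h4 h5 h6 h7 h8 h9
  refine ⟨fun x y => ?_, fun x y => ?_, fun x y => ?_, fun x y => ?_, fun x y => ?_,
    fun x y => ?_, fun x y => ?_, fun x y => ?_, fun x y => ?_⟩ <;>
    simp only [dualize, LinearMap.comp_apply, map_add, map_neg, LinearMap.add_apply,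
      LinearMap.neg_apply, LinearMap.comp_add, LinearMap.add_comp, LinearMap.comp_neg,
      LinearMap.neg_comp, ← Dual.transpose_comp] <;>
    simp only [← map_add (Dual.transpose (R := K) (M := V) (M' := V)),
      ← map_neg (Dual.transpose (R := K) (M := V) (M' := V))] <;>
    congr 1
  · linear_combination (norm := abel) h6 y x
  · linear_combination (norm := abel) - h8 y x
  · linear_combination (norm := abel) - h7 y x - h4 y x - h1 y x
  · linear_combination (norm := abel) h9 y x
  · linear_combination (norm := abel) h8 y x + h5 y x + h2 y x
  · linear_combination (norm := abel) h1 y x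
  · linear_combination (norm := abel) - h9 y x - h6 y x - h3 y x
  · linear_combination (norm := abel) - h2 y x
  · linear_combination (norm := abel) h4 y x
end

section
variable {K A V : Type*} [Field K] [AddCommGroup A] [Module K A] [AddCommGroup V] [Module K V]

def oOperatorDefect (m : A →ₗ[K] A →ₗ[K] A) (l r : A →ₗ[K] V →ₗ[K] V) (T : V →ₗ[K] A)
    (u v : V) : A :=
  m (T u) (T v) - T (l (T u) v + r (T v) u)

lemma exists_eq_coprod_eval [FiniteDimensional K V] (F : Dual K (A × Dual K V)) :
    ∃ (x : Dual K A) (w : V), F = x.coprod (Dual.eval K V w) := by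
  obtain ⟨⟨x, φ⟩, rfl⟩ := (dualProdDualEquivDual K A (Dual K V)).surjective F
  obtain ⟨w, rfl⟩ := (Module.evalEquiv K V).surjective φ
  exact ⟨x, w, rfl⟩

variable [FiniteDimensional K V] (succ prec : A →ₗ[K] A →ₗ[K] A)
  (ls rs lp rp : A →ₗ[K] V →ₗ[K] V) (T : V →ₗ[K] A)

lemma dualDistrib₃_dEquation (x₁ x₂ x₃ : Dual K A) (w₁ w₂ w₃ : V) :
    let r := asTensor T + TensorProduct.comm K _ _ (asTensor T)
    let F := dualDistrib₃ (x₁.coprod (Dual.eval K V w₁)) (x₂.coprod (Dual.eval K V w₂))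
      (x₃.coprod (Dual.eval K V w₃))
    F (tprod12_13 (sd succ (dualize (rs + rp)) (dualize (-lp))
          + sd prec (dualize (-rs)) (dualize (ls + lp))) r) -
      F (tprod13_23 (sd prec (dualize (-rs)) (dualize (ls + lp))) r
          + tprod23_12 (sd succ (dualize (rs + rp)) (dualize (-lp))) r) =
    x₁ (oOperatorDefect succ ls rs T w₂ w₃ + oOperatorDefect prec lp rp T w₂ w₃)
      - x₂ (oOperatorDefect succ ls rs T w₃ w₁) - x₃ (oOperatorDefect prec lp rp T w₁ w₂) := by
  intro r F
  rw [map_add, dualDistrib₃_tprod12_13, dualDistrib₃_tprod13_23, dualDistrib₃_tprod23_12]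
  simp only [r, rightContract_asTensor_add_comm, leftContract_asTensor_add_comm]
  simp only [LinearMap.add_apply, sd_apply, oOperatorDefect, dualize, LinearMap.comp_apply,
    Dual.transpose_apply, coprod_apply, Dual.eval_apply, map_add, map_sub, map_neg,
    LinearMap.neg_apply]
  ring

lemma dEquation_iff_oOperatorDefect_eq_zero :
    tprod12_13 (sd succ (dualize (rs + rp)) (dualize (-lp))
          + sd prec (dualize (-rs)) (dualize (ls + lp)))
        (asTensor T + TensorProduct.comm K _ _ (asTensor T)) =
      tprod13_23 (sd prec (dualize (-rs)) (dualize (ls + lp)))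
          (asTensor T + TensorProduct.comm K _ _ (asTensor T))
        + tprod23_12 (sd succ (dualize (rs + rp)) (dualize (-lp)))
          (asTensor T + TensorProduct.comm K _ _ (asTensor T)) ↔
    (∀ u v, oOperatorDefect succ ls rs T u v = 0) ∧
      (∀ u v, oOperatorDefect prec lp rp T u v = 0) := by
  constructor
  · intro hD
    have key : ∀ (x₁ x₂ x₃ : Dual K A) (w₁ w₂ w₃ : V),
        x₁ (oOperatorDefect succ ls rs T w₂ w₃ + oOperatorDefect prec lp rp T w₂ w₃)
          - x₂ (oOperatorDefect succ ls rs T w₃ w₁) - x₃ (oOperatorDefect prec lp rp T w₁ w₂) = 0 :=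
      fun x₁ x₂ x₃ w₁ w₂ w₃ => by
        rw [← dualDistrib₃_dEquation succ prec ls rs lp rp T x₁ x₂ x₃ w₁ w₂ w₃, hD, sub_self]
    refine ⟨fun u v => ?_, fun u v => ?_⟩ <;>
      refine (Module.forall_dual_apply_eq_zero_iff K _).mp fun φ => ?_
    · simpa using key 0 φ 0 v 0 u
    · simpa using key 0 0 φ u v 0
  · rintro ⟨hsucc, hprec⟩
    refine eq_of_forall_dualDistrib₃_eq fun F G H => ?_
    obtain ⟨x₁, w₁, rfl⟩ := exists_eq_coprod_eval F
    obtain ⟨x₂, w₂, rfl⟩ := exists_eq_coprod_eval G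
    obtain ⟨x₃, w₃, rfl⟩ := exists_eq_coprod_eval H
    rw [← sub_eq_zero, dualDistrib₃_dEquation]
    simp [hsucc, hprec]
end

theorem symmetrized_Ooperator_solves_D_equation_iff_general
    {K A V : Type*} [Field K] [AddCommGroup A] [Module K A]
    [AddCommGroup V] [Module K V] [FiniteDimensional K V]
    (succ prec : A →ₗ[K] A →ₗ[K] A)
    (ls rs lp rp : A →ₗ[K] V →ₗ[K] V)
    (hbim : IsDendBimodule succ prec ls rs lp rp)
    (T : V →ₗ[K] A) :
    IsDendBimodule succ prec
      (dualize (rs + rp)) (dualize (-lp)) (dualize (-rs)) (dualize (ls + lp)) ∧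
    ((((TensorProduct.comm K (A × Module.Dual K V) (A × Module.Dual K V))
          (asTensor T + (TensorProduct.comm K (A × Module.Dual K V)
            (A × Module.Dual K V)) (asTensor T))
        = asTensor T + (TensorProduct.comm K (A × Module.Dual K V)
            (A × Module.Dual K V)) (asTensor T)) ∧
      (tprod12_13
          (sd succ (dualize (rs + rp)) (dualize (-lp))
            + sd prec (dualize (-rs)) (dualize (ls + lp)))
          (asTensor T + (TensorProduct.comm K (A × Module.Dual K V)
            (A × Module.Dual K V)) (asTensor T))
        = tprod13_23 (sd prec (dualize (-rs)) (dualize (ls + lp)))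
            (asTensor T + (TensorProduct.comm K (A × Module.Dual K V)
              (A × Module.Dual K V)) (asTensor T))
          + tprod23_12 (sd succ (dualize (rs + rp)) (dualize (-lp)))
              (asTensor T + (TensorProduct.comm K (A × Module.Dual K V)
                (A × Module.Dual K V)) (asTensor T)))) ↔
     ((∀ u v : V, succ (T u) (T v) = T (ls (T u) v + rs (T v) u)) ∧
      (∀ u v : V, prec (T u) (T v) = T (lp (T u) v + rp (T v) u)))) := by
  refine ⟨hbim.dual, ?_⟩
  have hsymm : TensorProduct.comm K _ _ (asTensor T + TensorProduct.comm K _ _ (asTensor T)) =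
      asTensor T + TensorProduct.comm K _ _ (asTensor T) := by
    rw [map_add, comm_comm, add_comm]
  rw [and_iff_right hsymm, dEquation_iff_oOperatorDefect_eq_zero]
  simp only [oOperatorDefect, sub_eq_zero]

/-- Theorem 3.3.5: let `(l_≻, r_≻, l_≺, r_≺, V)` be a bimodule of a finite-dimensional
dendriform algebra `(A, ≻, ≺)`; the dual maps
`(r_≻* + r_≺*, −l_≺*, −r_≻*, l_≻* + l_≺*)` form a bimodule of `(A, ≻, ≺)` on `V*`,
and, identifying a linear map `T : V → A` with an element of
`A ⊗ V* ⊆ (A ⋉ V*) ⊗ (A ⋉ V*)`, the element `r = T + σ(T)` is a symmetric solution of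
the `D`-equation in the semidirect-product dendriform algebra `A ⋉ V*` if and only if
`T` is an `O`-operator of `(A, ≻, ≺)` associated to `(l_≻, r_≻, l_≺, r_≺, V)`. -/
theorem symmetrized_Ooperator_solves_D_equation_iff
    {K A V : Type*} [Field K] [CharZero K] [AddCommGroup A] [Module K A]
    [FiniteDimensional K A] [AddCommGroup V] [Module K V] [FiniteDimensional K V]
    (succ prec : A →ₗ[K] A →ₗ[K] A)
    (hdend : IsDendriform succ prec)
    (ls rs lp rp : A →ₗ[K] V →ₗ[K] V)
    (hbim : IsDendBimodule succ prec ls rs lp rp)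
    (T : V →ₗ[K] A) :
    IsDendBimodule succ prec
      (dualize (rs + rp)) (dualize (-lp)) (dualize (-rs)) (dualize (ls + lp)) ∧
    ((((TensorProduct.comm K (A × Module.Dual K V) (A × Module.Dual K V))
          (asTensor T + (TensorProduct.comm K (A × Module.Dual K V)
            (A × Module.Dual K V)) (asTensor T))
        = asTensor T + (TensorProduct.comm K (A × Module.Dual K V)
            (A × Module.Dual K V)) (asTensor T)) ∧
      (tprod12_13
          (sd succ (dualize (rs + rp)) (dualize (-lp))
            + sd prec (dualize (-rs)) (dualize (ls + lp)))
          (asTensor T + (TensorProduct.comm K (A × Module.Dual K V)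
            (A × Module.Dual K V)) (asTensor T))
        = tprod13_23 (sd prec (dualize (-rs)) (dualize (ls + lp)))
            (asTensor T + (TensorProduct.comm K (A × Module.Dual K V)
              (A × Module.Dual K V)) (asTensor T))
          + tprod23_12 (sd succ (dualize (rs + rp)) (dualize (-lp)))
              (asTensor T + (TensorProduct.comm K (A × Module.Dual K V)
                (A × Module.Dual K V)) (asTensor T)))) ↔
     ((∀ u v : V, succ (T u) (T v) = T (ls (T u) v + rs (T v) u)) ∧
      (∀ u v : V, prec (T u) (T v) = T (lp (T u) v + rp (T v) u)))) :=
  symmetrized_Ooperator_solves_D_equation_iff_general succ prec ls rs lp rp hbim T
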